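/- For every natural number i > 0, ∫_0^{1/(3^i+1)} f(t) dt = (2^(i-1) / 9^i) · ((3^i - 1) / (3^i + 1)) · (1 / (1 - (2/9)^i)). -/

import Mathlib

open intervalIntegral Set

open MeasureTheory (volume)

/-! Write `F b = ∫₀ᵇ f` and `G b = ∫_{1-b}^1 f`. The maps `x ↦ x/3` and `x ↦ (2+x)/3` give
`F b = (2/9) F (3b)` and `G b = b/3 + (2/9) G (3b)` for `3b ≤ 1`, and together with the
middle map `x ↦ (2-x)/3` they force `∫₀¹ f = 1/2`. For `a = 1/(3^i+1)` one has
`3^i a = 1 - a`, so iterating `i` times expresses `F a` and `G a` through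
`F (1-a) = 1/2 - G a` and `G (1-a) = 1/2 - F a`; the resulting 2×2 linear system has the
stated value as its solution. -/

theorem IntervalIntegrable.of_mem_Icc {f : ℝ → ℝ} {a b u v : ℝ}
    (hf : IntervalIntegrable f volume a b) (hab : a ≤ b)
    (hu : u ∈ Icc a b) (hv : v ∈ Icc a b) : IntervalIntegrable f volume u v :=
  hf.mono_set (uIcc_subset_uIcc (by rwa [uIcc_of_le hab]) (by rwa [uIcc_of_le hab]))

section SelfSimilar

variable {f : ℝ → ℝ}

theorem integral_initial_segment_eq (hw1 : ∀ x ∈ Icc (0:ℝ) 1, f (x / 3) = (2/3) * f x)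
    {b : ℝ} (hb : 0 ≤ b) (hb1 : 3 * b ≤ 1) :
    ∫ t in (0:ℝ)..b, f t = 2/9 * ∫ t in (0:ℝ)..(3 * b), f t := by
  have hsub : ∫ x in (0:ℝ)..(3 * b), f (x / 3) = 3 * ∫ t in (0:ℝ)..b, f t := by
    simp [integral_comp_div f (by norm_num : (3:ℝ) ≠ 0)]
  have hscale : ∫ x in (0:ℝ)..(3 * b), f (x / 3) = ∫ x in (0:ℝ)..(3 * b), 2/3 * f x := by
    refine integral_congr fun x hx => ?_
    rw [uIcc_of_le (by linarith)] at hx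
    exact hw1 x ⟨hx.1, hx.2.trans hb1⟩
  rw [integral_const_mul] at hscale
  linarith

theorem integral_final_segment_eq (hf : IntervalIntegrable f volume 0 1)
    (hw3 : ∀ x ∈ Icc (0:ℝ) 1, f ((2 + x) / 3) = 1/3 + (2/3) * f x)
    {b : ℝ} (hb : 0 ≤ b) (hb1 : 3 * b ≤ 1) :
    ∫ t in (1 - b)..1, f t = b / 3 + 2/9 * ∫ t in (1 - 3 * b)..1, f t := by
  have hsub : ∫ x in (1 - 3 * b)..1, f ((2 + x) / 3) = 3 * ∫ t in (1 - b)..1, f t := by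
    rw [integral_comp_add_left (fun y => f (y / 3)) 2,
      integral_comp_div f (by norm_num : (3:ℝ) ≠ 0),
      show (2 + (1 - 3 * b)) / 3 = 1 - b by ring]
    norm_num
  have hscale : ∫ x in (1 - 3 * b)..1, f ((2 + x) / 3)
      = ∫ x in (1 - 3 * b)..1, (1/3 + 2/3 * f x) := by
    refine integral_congr fun x hx => ?_
    rw [uIcc_of_le (by linarith)] at hx
    exact hw3 x ⟨by linarith [hx.1], hx.2⟩
  have hfb : IntervalIntegrable f volume (1 - 3 * b) 1 :=
    hf.of_mem_Icc zero_le_one ⟨by linarith, by linarith⟩ ⟨zero_le_one, le_rfl⟩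
  rw [integral_add intervalIntegrable_const (hfb.const_mul _), integral_const,
    integral_const_mul, smul_eq_mul] at hscale
  linarith

theorem integral_middle_third (hf : IntervalIntegrable f volume 0 1)
    (hw2 : ∀ x ∈ Icc (0:ℝ) 1, f ((2 - x) / 3) = (1/3) * (1 + f x)) :
    ∫ t in (1/3:ℝ)..(2/3), f t = 1/9 * (1 + ∫ t in (0:ℝ)..1, f t) := by
  have hsub : ∫ x in (0:ℝ)..1, f ((2 - x) / 3) = 3 * ∫ t in (1/3:ℝ)..(2/3), f t := by
    rw [integral_comp_sub_left (fun y => f (y / 3)) 2,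
      integral_comp_div f (by norm_num : (3:ℝ) ≠ 0)]
    norm_num
  have hscale : ∫ x in (0:ℝ)..1, f ((2 - x) / 3) = ∫ x in (0:ℝ)..1, 1/3 * (1 + f x) :=
    integral_congr fun x hx => hw2 x (by rwa [uIcc_of_le zero_le_one] at hx)
  rw [integral_const_mul, integral_add intervalIntegrable_const hf, integral_const,
    smul_eq_mul] at hscale
  linarith

theorem integral_unit_interval_eq_half (hf : IntervalIntegrable f volume 0 1)
    (hw1 : ∀ x ∈ Icc (0:ℝ) 1, f (x / 3) = (2/3) * f x)
    (hw2 : ∀ x ∈ Icc (0:ℝ) 1, f ((2 - x) / 3) = (1/3) * (1 + f x))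
    (hw3 : ∀ x ∈ Icc (0:ℝ) 1, f ((2 + x) / 3) = 1/3 + (2/3) * f x) :
    ∫ t in (0:ℝ)..1, f t = 1/2 := by
  have hint {u v : ℝ} (hu : u ∈ Icc (0:ℝ) 1) (hv : v ∈ Icc (0:ℝ) 1) :
      IntervalIntegrable f volume u v :=
    hf.of_mem_Icc zero_le_one hu hv
  have hleft := integral_initial_segment_eq hw1 (b := 1/3) (by norm_num) (by norm_num)
  have hright := integral_final_segment_eq hf hw3 (b := 1/3) (by norm_num) (by norm_num)
  norm_num at hleft hright
  have hsplit₁ := integral_add_adjacent_intervals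
    (hint (u := 0) (v := 1/3) (by norm_num) (by norm_num))
    (hint (v := 1) (by norm_num) (by norm_num))
  have hsplit₂ := integral_add_adjacent_intervals
    (hint (u := 1/3) (v := 2/3) (by norm_num) (by norm_num))
    (hint (v := 1) (by norm_num) (by norm_num))
  linarith [integral_middle_third hf hw2]

end SelfSimilar

theorem scaling_relation_iterate {Φ : ℝ → ℝ} {k : ℝ}
    (hΦ : ∀ b, 0 ≤ b → 3 * b ≤ 1 → Φ b = k * b + 2/9 * Φ (3 * b)) (n : ℕ) {b : ℝ}
    (hb : 0 ≤ b) (hb1 : 3 ^ n * b ≤ 1) :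
    Φ b = 3 * k * b * (1 - (2/3) ^ n) + (2/9) ^ n * Φ (3 ^ n * b) := by
  induction n generalizing b with
  | zero => simp
  | succ n ih =>
    have h3b : 3 * b ≤ 1 :=
      le_trans (by gcongr; exact le_self_pow₀ (by norm_num) (by omega)) hb1
    have h3pow : 3 ^ n * (3 * b) = 3 ^ (n + 1) * b := by ring
    rw [hΦ b hb h3b, ih (by linarith) (by rwa [h3pow]), h3pow]
    ring

theorem bourbaki_linear_system_solution {i : ℕ} (hi : 0 < i) {x y : ℝ}
    (hx : x = (2/9) ^ i * (1/2 - y))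
    (hy : y = 1 / (3 ^ i + 1) * (1 - (2/3) ^ i) + (2/9) ^ i * (1/2 - x)) :
    x = (2 ^ (i - 1) / 9 ^ i) * ((3 ^ i - 1) / (3 ^ i + 1)) * (1 / (1 - (2/9) ^ i)) := by
  obtain ⟨n, rfl⟩ : ∃ n, i = n + 1 := ⟨i - 1, by omega⟩
  set P : ℝ := 3 ^ (n + 1) with hP
  set Q : ℝ := 2 ^ (n + 1) with hQ
  have hQP : Q < P ^ 2 := by
    rw [hP, hQ, ← pow_mul]
    exact lt_of_lt_of_le (pow_lt_pow_left₀ (by norm_num) (by norm_num) (by omega))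
      (pow_le_pow_right₀ (by norm_num) (by omega))
  have hPpos : 0 < P := by positivity
  have hQpos : 0 < Q := by positivity
  have h29 : ((2:ℝ)/9) ^ (n + 1) = Q / P ^ 2 := by
    rw [hP, hQ, ← pow_mul, mul_comm, pow_mul, div_pow]; norm_num
  have h23 : ((2:ℝ)/3) ^ (n + 1) = Q / P := div_pow _ _ _
  have h9 : (9:ℝ) ^ (n + 1) = P ^ 2 := by rw [hP, ← pow_mul, mul_comm, pow_mul]; norm_num
  have h2 : (2:ℝ) ^ (n + 1 - 1) = Q / 2 := by rw [hQ, pow_succ]; simp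
  rw [hy, h29, h23] at hx
  rw [h29, h9, h2]
  have hne : P ^ 2 - Q ≠ 0 := by linarith
  have hne' : P ^ 2 + Q ≠ 0 := by linarith
  field_simp
  field_simp at hx
  apply mul_left_cancel₀ hne'
  linear_combination hx

theorem bourbaki_stmt_general (f : ℝ → ℝ)
    (hcont : ContinuousOn f (Set.Icc 0 1))
    (hw1 : ∀ x ∈ Set.Icc (0:ℝ) 1, f (x / 3) = (2/3) * f x)
    (hw2 : ∀ x ∈ Set.Icc (0:ℝ) 1, f ((2 - x) / 3) = (1/3) * (1 + f x))
    (hw3 : ∀ x ∈ Set.Icc (0:ℝ) 1, f ((2 + x) / 3) = 1/3 + (2/3) * f x) :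
    ∀ i : ℕ, 0 < i → ∫ t in (0:ℝ)..(1 / (3 ^ i + 1)), f t = (2 ^ (i - 1) / 9 ^ i) * ((3 ^ i - 1) / (3 ^ i + 1)) * (1 / (1 - (2/9) ^ i)) := by
  intro i hi
  have hf : IntervalIntegrable f volume 0 1 :=
    hcont.intervalIntegrable_of_Icc zero_le_one
  set a : ℝ := 1 / (3 ^ i + 1) with ha_def
  have ha : 0 ≤ a := by positivity
  have hscale : 3 ^ i * a = 1 - a := by rw [ha_def]; field_simp; ring
  have ha1 : a ≤ 1 := by linarith [hscale ▸ (by positivity : (0:ℝ) ≤ 3 ^ i * a)]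
  have hsplit : ∀ b ∈ Icc (0:ℝ) 1, (∫ t in (0:ℝ)..b, f t) + ∫ t in b..1, f t = 1 / 2 :=
    fun b hb => by
      rw [integral_add_adjacent_intervals (hf.of_mem_Icc zero_le_one (by simp) hb)
        (hf.of_mem_Icc zero_le_one hb (by simp)), integral_unit_interval_eq_half hf hw1 hw2 hw3]
  have hleft := scaling_relation_iterate (Φ := fun b => ∫ t in (0:ℝ)..b, f t) (k := 0)
    (fun b hb hb1 => by simpa using integral_initial_segment_eq hw1 hb hb1) i ha (by linarith)
  have hright := scaling_relation_iterate (Φ := fun b => ∫ t in (1 - b)..1, f t) (k := 1/3)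
    (fun b hb hb1 => by rw [integral_final_segment_eq hf hw3 hb hb1]; ring) i ha (by linarith)
  simp only [hscale, sub_sub_cancel] at hleft hright
  refine bourbaki_linear_system_solution hi (y := ∫ t in (1 - a)..1, f t) ?_ ?_
  · rw [hleft]; linear_combination (2/9 : ℝ) ^ i * hsplit (1 - a) ⟨by linarith, by linarith⟩
  · rw [hright]; linear_combination (2/9 : ℝ) ^ i * hsplit a ⟨ha, ha1⟩

theorem bourbaki_stmt (f : ℝ → ℝ)
    (hcont : ContinuousOn f (Set.Icc 0 1))
    (h0 : f 0 = 0) (h1 : f 1 = 1)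
    (hw1 : ∀ x ∈ Set.Icc (0:ℝ) 1, f (x / 3) = (2/3) * f x)
    (hw2 : ∀ x ∈ Set.Icc (0:ℝ) 1, f ((2 - x) / 3) = (1/3) * (1 + f x))
    (hw3 : ∀ x ∈ Set.Icc (0:ℝ) 1, f ((2 + x) / 3) = 1/3 + (2/3) * f x) :
    ∀ i : ℕ, 0 < i → ∫ t in (0:ℝ)..(1 / (3 ^ i + 1)), f t = (2 ^ (i - 1) / 9 ^ i) * ((3 ^ i - 1) / (3 ^ i + 1)) * (1 / (1 - (2/9) ^ i)) :=
  bourbaki_stmt_general f hcont hw1 hw2 hw3
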